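/- arXiv:1909.04767 — 5 statements merged into one kernel-verified Lean document; each statement's English description precedes it below -/
import Mathlib

section
/- Let r, s : [0,1] → ℝ be integrable functions with ∫_0^u r(t) dt ≤ ∫_0^u s(t) dt for all u ∈ [0,1]. Then for every nonincreasing function h : [0,1] → ℝ with h(t) > 0, we have ∫_0^u r(t) h(t) dt ≤ ∫_0^u s(t) h(t) dt for all u ∈ [0,1]. -/
open Set intervalIntegral

/-- If all partial integrals of `r` on `[0,1]` are dominated by those of `s`, then the same
holds for the integrals weighted by any positive nonincreasing function `h`. -/
theorem stmt_1 (r s : ℝ → ℝ)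
    (hr : IntervalIntegrable r MeasureTheory.volume 0 1)
    (hs : IntervalIntegrable s MeasureTheory.volume 0 1)
    (hle : ∀ u ∈ Icc (0:ℝ) 1, ∫ t in (0:ℝ)..u, r t ≤ ∫ t in (0:ℝ)..u, s t)
    (h : ℝ → ℝ) (hh_anti : AntitoneOn h (Icc 0 1)) (hh_pos : ∀ t ∈ Icc (0:ℝ) 1, 0 < h t) :
    ∀ u ∈ Icc (0:ℝ) 1, ∫ t in (0:ℝ)..u, r t * h t ≤ ∫ t in (0:ℝ)..u, s t * h t := by
  intro u hu
  obtain ⟨hu0, hu1⟩ := hu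
  set f : ℝ → ℝ := fun t => s t - r t with hf_def
  -- global antitone extension of `h` clamped to `[0, u]`
  set G : ℝ → ℝ := fun t => h (min (max t 0) u) with hG_def
  have hclamp : ∀ t : ℝ, min (max t 0) u ∈ Icc (0:ℝ) 1 := fun t =>
    ⟨le_min (le_max_right t 0) hu0, (min_le_right _ _).trans hu1⟩
  have hG_anti : Antitone G := fun a b hab =>
    hh_anti (hclamp a) (hclamp b) (min_le_min (max_le_max hab le_rfl) le_rfl)
  have hG_meas : Measurable G := hG_anti.measurable
  have hG_pos : ∀ t, 0 < G t := fun t => hh_pos _ (hclamp t)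
  have hG_bdd : ∀ t, G t ≤ h 0 := fun t =>
    hh_anti ⟨le_refl 0, zero_le_one⟩ (hclamp t) (hclamp t).1
  have hG_eq : ∀ t ∈ Icc 0 u, G t = h t := by
    intro t ht
    simp [hG_def, max_eq_left ht.1, min_eq_left ht.2]
  -- integrability of r, s, f on Ioc 0 u
  have hsub : uIcc (0:ℝ) u ⊆ uIcc (0:ℝ) 1 :=
    uIcc_subset_uIcc left_mem_uIcc (by rw [uIcc_of_le zero_le_one]; exact ⟨hu0, hu1⟩)
  have hr' : MeasureTheory.IntegrableOn r (Ioc 0 u) := (hr.mono_set hsub).1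
  have hs' : MeasureTheory.IntegrableOn s (Ioc 0 u) := (hs.mono_set hsub).1
  have hf' : MeasureTheory.IntegrableOn f (Ioc 0 u) := hs'.sub hr'
  set μ := MeasureTheory.volume.restrict (Ioc (0:ℝ) u) with hμ_def
  have hGmul : ∀ g : ℝ → ℝ, MeasureTheory.IntegrableOn g (Ioc 0 u) →
      MeasureTheory.Integrable (fun t => G t * g t) μ := by
    intro g hg
    exact hg.bdd_mul hG_meas.aestronglyMeasurable
      (c := h 0) (Filter.Eventually.of_forall fun t => by rw [Real.norm_eq_abs, abs_of_pos (hG_pos t)]; exact hG_bdd t)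
  -- the two-variable function for Fubini
  set F : ℝ → ℝ → ℝ := fun t l => (Ioo (0:ℝ) (G t)).indicator (fun _ => f t) l with hF_def
  have hA : MeasurableSet {p : ℝ × ℝ | p.2 ∈ Ioo 0 (G p.1)} := by
    have h1 : MeasurableSet {p : ℝ × ℝ | (0:ℝ) < p.2} :=
      measurableSet_lt measurable_const measurable_snd
    have h2 : MeasurableSet {p : ℝ × ℝ | p.2 < G p.1} :=
      measurableSet_lt measurable_snd (hG_meas.comp measurable_fst)
    exact h1.inter h2
  have huncurry : Function.uncurry F =
      Set.indicator {p : ℝ × ℝ | p.2 ∈ Ioo 0 (G p.1)} (fun p => f p.1) := by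
    funext p
    by_cases hp : p.2 ∈ Ioo 0 (G p.1) <;>
      simp [Function.uncurry, hF_def, Set.indicator_apply, hp]
  have hFint : MeasureTheory.Integrable (Function.uncurry F)
      (μ.prod MeasureTheory.volume) := by
    have hmeas : MeasureTheory.AEStronglyMeasurable (Function.uncurry F)
        (μ.prod MeasureTheory.volume) := by
      rw [huncurry]
      exact (hf'.aestronglyMeasurable.comp_fst).indicator hA
    have hbound : MeasureTheory.Integrable
        (fun p : ℝ × ℝ => |f p.1| * (Ioc (0:ℝ) (h 0)).indicator (fun _ => (1:ℝ)) p.2)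
        (μ.prod MeasureTheory.volume) := by
      refine MeasureTheory.Integrable.mul_prod hf'.abs ?_
      rw [MeasureTheory.integrable_indicator_iff measurableSet_Ioc]
      exact MeasureTheory.integrableOn_const (by simp) (by simp)
    refine hbound.mono' hmeas (Filter.Eventually.of_forall fun p => ?_)
    rw [huncurry]
    by_cases hp : p ∈ {p : ℝ × ℝ | p.2 ∈ Ioo 0 (G p.1)}
    · rw [Set.indicator_of_mem hp]
      have hp2 : p.2 ∈ Ioc (0:ℝ) (h 0) := ⟨hp.1, le_of_lt (lt_of_lt_of_le hp.2 (hG_bdd p.1))⟩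
      rw [Set.indicator_of_mem hp2, Real.norm_eq_abs, mul_one]
    · rw [Set.indicator_of_notMem hp]
      simp only [norm_zero]
      exact mul_nonneg (abs_nonneg _) (Set.indicator_nonneg (fun _ _ => zero_le_one) _)
  -- Step A: pointwise evaluation of the inner integral
  have stepA : ∀ t, (∫ l, F t l) = G t * f t := by
    intro t
    rw [hF_def]
    rw [MeasureTheory.integral_indicator_const (f t) measurableSet_Ioo]
    rw [Real.volume_real_Ioo_of_le (le_of_lt (hG_pos t)), sub_zero]
    simp [smul_eq_mul]
  -- Step D: the swapped inner integral is nonneg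
  have stepD : ∀ l : ℝ, 0 ≤ ∫ t, F t l ∂μ := by
    intro l
    rcases le_or_gt l 0 with hl | hl
    · have : ∀ t, F t l = 0 := by
        intro t
        rw [hF_def]
        exact Set.indicator_of_notMem (fun hmem => absurd hmem.1 (not_lt.2 hl)) _
      simp [this]
    · -- the sublevel set
      set T : Set ℝ := {t | l < G t} with hT_def
      have hT : MeasurableSet T := measurableSet_lt measurable_const hG_meas
      have hFeq : ∀ t, F t l = T.indicator f t := by
        intro t
        by_cases ht : t ∈ T
        · rw [Set.indicator_of_mem ht]
          show (Ioo 0 (G t)).indicator (fun _ => f t) l = f t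
          exact Set.indicator_of_mem (Set.mem_Ioo.2 ⟨hl, ht⟩) _
        · rw [Set.indicator_of_notMem ht]
          show (Ioo 0 (G t)).indicator (fun _ => f t) l = 0
          exact Set.indicator_of_notMem (fun hmem => ht hmem.2) _
      simp only [hFeq]
      rw [MeasureTheory.integral_indicator hT, hμ_def,
        MeasureTheory.Measure.restrict_restrict hT]
      set S : Set ℝ := T ∩ Ioc 0 u with hS_def
      have hSsub : S ⊆ Icc 0 u := fun x hx => ⟨le_of_lt hx.2.1, hx.2.2⟩
      have hbddS : BddAbove (insert (0:ℝ) S) :=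
        ⟨u, fun x hx => hx.elim (fun h0 => h0 ▸ hu0) (fun hxS => (hxS.2.2 : x ≤ u))⟩
      set c : ℝ := sSup (insert (0:ℝ) S) with hc_def
      have hc0 : 0 ≤ c := le_csSup hbddS (mem_insert 0 S)
      have hcu : c ≤ u := csSup_le (insert_nonempty _ _)
        (fun x hx => hx.elim (fun h0 => h0 ▸ hu0) (fun hxS => hxS.2.2))
      have hsub1 : Ioo 0 c ⊆ S := by
        intro x hx
        obtain ⟨y, hy, hxy⟩ := exists_lt_of_lt_csSup (insert_nonempty _ _) hx.2
        have hyS : y ∈ S := by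
          rcases hy with h0 | hyS
          · exact absurd (h0 ▸ hxy) (not_lt.2 (le_of_lt hx.1))
          · exact hyS
        exact ⟨lt_of_lt_of_le hyS.1 (hG_anti (le_of_lt hxy)),
          hx.1, le_trans (le_of_lt hxy) hyS.2.2⟩
      have hsub2 : S ⊆ Ioc 0 c := fun x hx =>
        ⟨hx.2.1, le_csSup hbddS (mem_insert_of_mem _ hx)⟩
      have hae : S =ᵐ[MeasureTheory.volume] Ioc 0 c := by
        rw [MeasureTheory.ae_eq_set]
        constructor
        · rw [Set.diff_eq_empty.2 hsub2]; simp
        · refine MeasureTheory.measure_mono_null (t := {c}) ?_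
            (MeasureTheory.measure_singleton c)
          intro x hx
          by_contra hxc
          have hxc' : x < c := lt_of_le_of_ne hx.1.2 hxc
          exact hx.2 (hsub1 ⟨hx.1.1, hxc'⟩)
      rw [MeasureTheory.setIntegral_congr_set hae]
      have : (∫ t in Ioc 0 c, f t) = ∫ t in (0:ℝ)..c, f t :=
        (intervalIntegral.integral_of_le hc0).symm
      rw [this]
      have hsubc : uIcc (0:ℝ) c ⊆ uIcc (0:ℝ) 1 :=
        uIcc_subset_uIcc left_mem_uIcc
          (by rw [uIcc_of_le zero_le_one]; exact ⟨hc0, hcu.trans hu1⟩)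
      rw [hf_def, intervalIntegral.integral_sub (hs.mono_set hsubc) (hr.mono_set hsubc)]
      exact sub_nonneg.2 (hle c ⟨hc0, hcu.trans hu1⟩)
  -- Assemble
  have key : 0 ≤ ∫ t, G t * f t ∂μ := by
    have h1 : (∫ t, G t * f t ∂μ) = ∫ t, ∫ l, F t l ∂MeasureTheory.volume ∂μ := by
      refine MeasureTheory.integral_congr_ae (Filter.Eventually.of_forall fun t => ?_)
      exact (stepA t).symm
    rw [h1, MeasureTheory.integral_integral_swap hFint]
    exact MeasureTheory.integral_nonneg stepD
  rw [intervalIntegral.integral_of_le hu0, intervalIntegral.integral_of_le hu0]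
  have hrG : (∫ t in Ioc (0:ℝ) u, r t * h t) = ∫ t, G t * r t ∂μ := by
    refine MeasureTheory.setIntegral_congr_fun measurableSet_Ioc fun t ht => ?_
    rw [hG_eq t ⟨le_of_lt ht.1, ht.2⟩, mul_comm]
  have hsG : (∫ t in Ioc (0:ℝ) u, s t * h t) = ∫ t, G t * s t ∂μ := by
    refine MeasureTheory.setIntegral_congr_fun measurableSet_Ioc fun t ht => ?_
    rw [hG_eq t ⟨le_of_lt ht.1, ht.2⟩, mul_comm]
  rw [hrG, hsG, ← sub_nonneg, ← MeasureTheory.integral_sub (hGmul s hs') (hGmul r hr')]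
  have : (fun t => G t * s t - G t * r t) = fun t => G t * f t := by
    funext t; rw [hf_def]; ring
  rw [this]
  exact key
end

section
/- Let H, G be twice continuously differentiable distortion functions on [0,1] with positive derivatives such that G'/H' is nonincreasing. Let Q_X, Q_Y : [0,1] → ℝ be nondecreasing (quantile) functions. If ∫_0^u Q_X(t) H'(t) dt ≥ ∫_0^u Q_Y(t) H'(t) dt for all u ∈ [0,1], then ∫_0^u Q_X(t) G'(t) dt ≥ ∫_0^u Q_Y(t) G'(t) dt for all u ∈ [0,1]. -/
open Set intervalIntegral MeasureTheory

/-- Abel/Fubini key lemma: if `f` is integrable on `(0,u]`, `ψ` is integrable on `(0,u]`, then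
`∫_{(0,u]} f t (∫_{(t,u]} ψ) dt = ∫_{(0,u]} ψ s (∫_{(0,s)} f) ds`. -/
theorem swap_aux (f ψ : ℝ → ℝ) (u : ℝ) (hu : 0 ≤ u)
    (hf : IntegrableOn f (Ioc 0 u)) (hψ : IntegrableOn ψ (Ioc 0 u)) :
    ∫ t in Ioc 0 u, f t * (∫ s in Ioc t u, ψ s) =
      ∫ s in Ioc 0 u, ψ s * (∫ t in Ioo 0 s, f t) := by
  set μ := (volume : Measure ℝ).restrict (Ioc 0 u) with hμ
  set k : ℝ → ℝ → ℝ := fun t s => ({p : ℝ × ℝ | p.1 < p.2}.indicator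
    (fun p => f p.1 * ψ p.2)) (t, s) with hk
  have hint : Integrable (Function.uncurry k) (μ.prod μ) := by
    have hbase : Integrable (fun p : ℝ × ℝ => f p.1 * ψ p.2) (μ.prod μ) :=
      Integrable.mul_prod hf hψ
    have hmeas : MeasurableSet {p : ℝ × ℝ | p.1 < p.2} :=
      measurableSet_lt measurable_fst measurable_snd
    have : Function.uncurry k = {p : ℝ × ℝ | p.1 < p.2}.indicator
        (fun p => f p.1 * ψ p.2) := by
      funext p
      simp [hk, Function.uncurry]
    rw [this]
    exact hbase.indicator hmeas
  have hswap := MeasureTheory.integral_integral_swap hint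
  have hL : ∀ t ∈ Ioc (0:ℝ) u, (∫ s, k t s ∂μ) = f t * ∫ s in Ioc t u, ψ s := by
    intro t ht
    have h1 : (fun s => k t s) = (Ioi t).indicator (fun s => f t * ψ s) := by
      funext s
      by_cases h : t < s <;> simp [hk, Set.indicator_apply, h]
    rw [h1, hμ, MeasureTheory.setIntegral_indicator measurableSet_Ioi]
    have h2 : Ioc 0 u ∩ Ioi t = Ioc t u := by
      ext x
      simp only [mem_inter_iff, mem_Ioc, mem_Ioi]
      constructor
      · rintro ⟨⟨_, hxu⟩, htx⟩; exact ⟨htx, hxu⟩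
      · rintro ⟨htx, hxu⟩; exact ⟨⟨ht.1.trans htx, hxu⟩, htx⟩
    rw [h2, MeasureTheory.integral_const_mul]
  have hR : ∀ s ∈ Ioc (0:ℝ) u, (∫ t, k t s ∂μ) = ψ s * ∫ t in Ioo 0 s, f t := by
    intro s hs
    have h1 : (fun t => k t s) = (Iio s).indicator (fun t => f t * ψ s) := by
      funext t
      by_cases h : t < s <;> simp [hk, Set.indicator_apply, h]
    rw [h1, hμ, MeasureTheory.setIntegral_indicator measurableSet_Iio]
    have h2 : Ioc 0 u ∩ Iio s = Ioo 0 s := by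
      ext x
      simp only [mem_inter_iff, mem_Ioc, mem_Iio, mem_Ioo]
      constructor
      · rintro ⟨⟨hx0, _⟩, hxs⟩; exact ⟨hx0, hxs⟩
      · rintro ⟨hx0, hxs⟩; exact ⟨⟨hx0, hxs.le.trans hs.2⟩, hxs⟩
    rw [h2]
    rw [show (fun t => f t * ψ s) = fun t => ψ s * f t by funext t; ring]
    rw [MeasureTheory.integral_const_mul]
  calc ∫ t in Ioc 0 u, f t * (∫ s in Ioc t u, ψ s)
      = ∫ t, (∫ s, k t s ∂μ) ∂μ := by
        rw [hμ]
        exact (MeasureTheory.setIntegral_congr_fun measurableSet_Ioc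
          (fun t ht => (hL t ht).symm))
    _ = ∫ s, (∫ t, k t s ∂μ) ∂μ := hswap
    _ = ∫ s in Ioc 0 u, ψ s * (∫ t in Ioo 0 s, f t) := by
        rw [hμ]
        exact (MeasureTheory.setIntegral_congr_fun measurableSet_Ioc
          (fun s hs => hR s hs))

/-- If `H` is more convex than `G` (i.e. `G'/H'` is nonincreasing), then `H`-distorted
stochastic dominance implies `G`-distorted stochastic dominance. -/
theorem stmt_4 (H G : ℝ → ℝ)
    (hH : ContDiffOn ℝ 2 H (Icc 0 1)) (hG : ContDiffOn ℝ 2 G (Icc 0 1))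
    (hH0 : H 0 = 0) (hH1 : H 1 = 1) (hG0 : G 0 = 0) (hG1 : G 1 = 1)
    (hH' : ∀ u ∈ Icc (0:ℝ) 1, 0 < deriv H u) (hG' : ∀ u ∈ Icc (0:ℝ) 1, 0 < deriv G u)
    (hratio : AntitoneOn (fun u => deriv G u / deriv H u) (Icc 0 1))
    (QX QY : ℝ → ℝ) (hQX : MonotoneOn QX (Icc 0 1)) (hQY : MonotoneOn QY (Icc 0 1))
    (hdom : ∀ u ∈ Icc (0:ℝ) 1,
      ∫ t in (0:ℝ)..u, QX t * deriv H t ≥ ∫ t in (0:ℝ)..u, QY t * deriv H t) :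
    ∀ u ∈ Icc (0:ℝ) 1,
      ∫ t in (0:ℝ)..u, QX t * deriv G t ≥ ∫ t in (0:ℝ)..u, QY t * deriv G t := by
  have hUD : UniqueDiffOn ℝ (Icc (0:ℝ) 1) := uniqueDiffOn_Icc (by norm_num)
  -- deriv = derivWithin on Icc
  have hHd : ∀ x ∈ Icc (0:ℝ) 1, DifferentiableAt ℝ H x := by
    intro x hx
    by_contra h
    have := hH' x hx
    rw [deriv_zero_of_not_differentiableAt h] at this
    exact lt_irrefl 0 this
  have hGd : ∀ x ∈ Icc (0:ℝ) 1, DifferentiableAt ℝ G x := by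
    intro x hx
    by_contra h
    have := hG' x hx
    rw [deriv_zero_of_not_differentiableAt h] at this
    exact lt_irrefl 0 this
  have hHw : ∀ x ∈ Icc (0:ℝ) 1, derivWithin H (Icc 0 1) x = deriv H x :=
    fun x hx => (hHd x hx).derivWithin (hUD x hx)
  have hGw : ∀ x ∈ Icc (0:ℝ) 1, derivWithin G (Icc 0 1) x = deriv G x :=
    fun x hx => (hGd x hx).derivWithin (hUD x hx)
  have hHcd : ContDiffOn ℝ 1 (derivWithin H (Icc 0 1)) (Icc 0 1) :=
    hH.derivWithin hUD (by norm_num)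
  have hGcd : ContDiffOn ℝ 1 (derivWithin G (Icc 0 1)) (Icc 0 1) :=
    hG.derivWithin hUD (by norm_num)
  have hH'c : ContinuousOn (deriv H) (Icc 0 1) :=
    hHcd.continuousOn.congr fun x hx => (hHw x hx).symm
  have hG'c : ContinuousOn (deriv G) (Icc 0 1) :=
    hGcd.continuousOn.congr fun x hx => (hGw x hx).symm
  -- the ratio function
  set φ : ℝ → ℝ := fun x => deriv G x / deriv H x with hφdef
  set φt : ℝ → ℝ := fun x => derivWithin G (Icc 0 1) x / derivWithin H (Icc 0 1) x with hφtdef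
  have hφeq : ∀ x ∈ Icc (0:ℝ) 1, φt x = φ x := by
    intro x hx; simp only [hφtdef, hφdef, hHw x hx, hGw x hx]
  have hφtcd : ContDiffOn ℝ 1 φt (Icc 0 1) :=
    hGcd.div hHcd (fun x hx => by rw [hHw x hx]; exact (hH' x hx).ne')
  set ψ : ℝ → ℝ := derivWithin φt (Icc 0 1) with hψdef
  have hψc : ContinuousOn ψ (Icc 0 1) := hφtcd.continuousOn_derivWithin hUD le_rfl
  have hφc : ContinuousOn φ (Icc 0 1) := hφtcd.continuousOn.congr fun x hx => (hφeq x hx).symm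
  have hφd : ∀ x ∈ Ioo (0:ℝ) 1, HasDerivAt φ (ψ x) x := by
    intro x hx
    have hxI : x ∈ Icc (0:ℝ) 1 := Ioo_subset_Icc_self hx
    have hnh : Icc (0:ℝ) 1 ∈ nhds x := Icc_mem_nhds hx.1 hx.2
    have hda : DifferentiableAt ℝ φt x :=
      ((hφtcd.differentiableOn one_ne_zero) x hxI).differentiableAt hnh
    have h1 : HasDerivAt φt (ψ x) x := by
      rw [hψdef, derivWithin_of_mem_nhds hnh]
      exact hda.hasDerivAt
    apply h1.congr_of_eventuallyEq
    filter_upwards [hnh] with y hy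
    exact (hφeq y hy).symm
  have hψ0 : ∀ x ∈ Ioo (0:ℝ) 1, ψ x ≤ 0 := by
    intro x hx
    have h1 : HasDerivWithinAt φ (ψ x) (Ioi x) x := (hφd x hx).hasDerivWithinAt
    rw [hasDerivWithinAt_iff_tendsto_slope] at h1
    have hIoi : Ioi x \ {x} = Ioi x := by
      ext y; simp only [mem_diff, mem_Ioi, mem_singleton_iff]
      exact ⟨fun h => h.1, fun h => ⟨h, ne_of_gt h⟩⟩
    rw [hIoi] at h1
    refine le_of_tendsto h1 ?_
    filter_upwards [Ioo_mem_nhdsGT_of_mem ⟨le_refl x, hx.2⟩] with y hy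
    rw [slope_def_field]
    apply div_nonpos_of_nonpos_of_nonneg
    · have := hratio (Ioo_subset_Icc_self hx) ⟨hx.1.le.trans hy.1.le, hy.2.le⟩ hy.1.le
      simpa [hφdef] using sub_nonpos.mpr this
    · exact sub_nonneg.mpr hy.1.le
  -- main argument
  intro u hu
  have hu0 : (0:ℝ) ≤ u := hu.1
  have hsub : Icc (0:ℝ) u ⊆ Icc 0 1 := Icc_subset_Icc le_rfl hu.2
  have huIcc : uIcc (0:ℝ) u = Icc 0 u := uIcc_of_le hu0
  -- integrability of building blocks
  set f : ℝ → ℝ := fun t => (QX t - QY t) * deriv H t with hfdef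
  have hQXH : IntervalIntegrable (fun t => QX t * deriv H t) volume 0 u := by
    apply IntervalIntegrable.mul_continuousOn
    · exact (hQX.mono (huIcc ▸ hsub)).intervalIntegrable
    · exact hH'c.mono (huIcc ▸ hsub)
  have hQYH : IntervalIntegrable (fun t => QY t * deriv H t) volume 0 u := by
    apply IntervalIntegrable.mul_continuousOn
    · exact (hQY.mono (huIcc ▸ hsub)).intervalIntegrable
    · exact hH'c.mono (huIcc ▸ hsub)
  have hQXG : IntervalIntegrable (fun t => QX t * deriv G t) volume 0 u := by
    apply IntervalIntegrable.mul_continuousOn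
    · exact (hQX.mono (huIcc ▸ hsub)).intervalIntegrable
    · exact hG'c.mono (huIcc ▸ hsub)
  have hQYG : IntervalIntegrable (fun t => QY t * deriv G t) volume 0 u := by
    apply IntervalIntegrable.mul_continuousOn
    · exact (hQY.mono (huIcc ▸ hsub)).intervalIntegrable
    · exact hG'c.mono (huIcc ▸ hsub)
  have hfi : IntervalIntegrable f volume 0 u := by
    have : f = (fun t => QX t * deriv H t) - (fun t => QY t * deriv H t) := by
      funext t; simp [hfdef]; ring
    rw [this]; exact hQXH.sub hQYH
  -- F and its nonnegativity
  set F : ℝ → ℝ := fun s => ∫ t in (0:ℝ)..s, f t with hFdef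
  have hFnn : ∀ s ∈ Icc (0:ℝ) 1, 0 ≤ F s := by
    intro s hs
    have hsIcc : uIcc (0:ℝ) s = Icc 0 s := uIcc_of_le hs.1
    have hsub' : Icc (0:ℝ) s ⊆ Icc 0 1 := Icc_subset_Icc le_rfl hs.2
    have h1 : IntervalIntegrable (fun t => QX t * deriv H t) volume 0 s := by
      apply IntervalIntegrable.mul_continuousOn
      · exact (hQX.mono (hsIcc ▸ hsub')).intervalIntegrable
      · exact hH'c.mono (hsIcc ▸ hsub')
    have h2 : IntervalIntegrable (fun t => QY t * deriv H t) volume 0 s := by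
      apply IntervalIntegrable.mul_continuousOn
      · exact (hQY.mono (hsIcc ▸ hsub')).intervalIntegrable
      · exact hH'c.mono (hsIcc ▸ hsub')
    have : F s = (∫ t in (0:ℝ)..s, QX t * deriv H t) - ∫ t in (0:ℝ)..s, QY t * deriv H t := by
      rw [hFdef, ← intervalIntegral.integral_sub h1 h2]
      apply intervalIntegral.integral_congr
      intro t _; simp [hfdef]; ring
    rw [this]
    exact sub_nonneg.mpr (hdom s hs)
  -- FTC for φ
  have hψi : ∀ t ∈ Icc (0:ℝ) u, IntervalIntegrable ψ volume t u := by
    intro t ht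
    apply ContinuousOn.intervalIntegrable
    apply hψc.mono
    rw [uIcc_of_le ht.2]
    exact Icc_subset_Icc ht.1 hu.2
  have hFTC : ∀ t ∈ Icc (0:ℝ) u, ∫ s in t..u, ψ s = φ u - φ t := by
    intro t ht
    apply intervalIntegral.integral_eq_sub_of_hasDeriv_right_of_le ht.2
    · exact hφc.mono (Icc_subset_Icc ht.1 hu.2)
    · intro x hx
      have hxI : x ∈ Ioo (0:ℝ) 1 := ⟨lt_of_le_of_lt ht.1 hx.1, lt_of_lt_of_le hx.2 hu.2⟩
      exact ((hφd x hxI).hasDerivWithinAt)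
    · exact hψi t ht
  -- pointwise factorization on Icc 0 1
  have hfφ : ∀ t ∈ Icc (0:ℝ) 1, (QX t - QY t) * deriv G t = f t * φ t := by
    intro t ht
    have h0 : deriv H t ≠ 0 := (hH' t ht).ne'
    simp only [hfdef, hφdef]
    rw [mul_assoc, mul_div_assoc', mul_div_cancel_left₀ _ h0]
  -- integrability of f * (φ u - φ ·)
  have hfφui : IntervalIntegrable (fun t => f t * (φ u - φ t)) volume 0 u := by
    apply IntervalIntegrable.mul_continuousOn hfi
    apply ContinuousOn.sub continuousOn_const
    exact hφc.mono (huIcc ▸ hsub)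
  -- the key computation
  have hIoo : ∀ s ∈ Icc (0:ℝ) 1, F s = ∫ t in Ioo 0 s, f t := by
    intro s hs
    rw [hFdef]
    simp only
    rw [intervalIntegral.integral_of_le hs.1, MeasureTheory.integral_Ioc_eq_integral_Ioo]
  have hfint : IntegrableOn f (Ioc 0 u) :=
    (intervalIntegrable_iff_integrableOn_Ioc_of_le hu0).mp hfi
  have hψint : IntegrableOn ψ (Ioc 0 u) :=
    (intervalIntegrable_iff_integrableOn_Ioc_of_le hu0).mp (hψi 0 ⟨le_rfl, hu0⟩)
  have hswap := swap_aux f ψ u hu0 hfint hψint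
  have hinner : ∀ t ∈ Ioc (0:ℝ) u, f t * (∫ s in Ioc t u, ψ s) = f t * (φ u - φ t) := by
    intro t ht
    rw [← intervalIntegral.integral_of_le ht.2, hFTC t ⟨ht.1.le, ht.2⟩]
  have key : ∫ t in (0:ℝ)..u, f t * φ t
      = φ u * F u - ∫ s in Ioc 0 u, ψ s * F s := by
    have e1 : ∫ t in (0:ℝ)..u, f t * φ t
        = ∫ t in (0:ℝ)..u, (f t * φ u - f t * (φ u - φ t)) := by
      apply intervalIntegral.integral_congr
      intro t _; ring
    have e2 : ∫ t in (0:ℝ)..u, (f t * φ u - f t * (φ u - φ t))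
        = (∫ t in (0:ℝ)..u, f t * φ u) - ∫ t in (0:ℝ)..u, f t * (φ u - φ t) := by
      exact intervalIntegral.integral_sub (hfi.mul_const _) hfφui
    have e3 : (∫ t in (0:ℝ)..u, f t * φ u) = φ u * F u := by
      rw [intervalIntegral.integral_mul_const, hFdef]; ring
    have e4 : ∫ t in (0:ℝ)..u, f t * (φ u - φ t)
        = ∫ s in Ioc 0 u, ψ s * F s := by
      rw [intervalIntegral.integral_of_le hu0]
      rw [← MeasureTheory.setIntegral_congr_fun measurableSet_Ioc hinner]
      rw [hswap]
      apply MeasureTheory.setIntegral_congr_fun measurableSet_Ioc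
      intro s hs
      show ψ s * (∫ t in Ioo 0 s, f t) = ψ s * F s
      rw [hIoo s ⟨hs.1.le, hs.2.trans hu.2⟩]
    rw [e1, e2, e3, e4]
  -- conclude
  rw [ge_iff_le, ← sub_nonneg, ← intervalIntegral.integral_sub hQXG hQYG]
  have e5 : ∫ t in (0:ℝ)..u, (QX t * deriv G t - QY t * deriv G t)
      = ∫ t in (0:ℝ)..u, f t * φ t := by
    apply intervalIntegral.integral_congr
    intro t ht
    show QX t * deriv G t - QY t * deriv G t = f t * φ t
    rw [← sub_mul]
    exact hfφ t (hsub (huIcc ▸ ht))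
  rw [e5, key]
  have h1 : 0 ≤ φ u * F u :=
    mul_nonneg (div_nonneg (hG' u hu).le (hH' u hu).le) (hFnn u hu)
  have h2 : ∫ s in Ioc 0 u, ψ s * F s ≤ 0 := by
    rw [MeasureTheory.integral_Ioc_eq_integral_Ioo]
    apply MeasureTheory.setIntegral_nonpos measurableSet_Ioo
    intro s hs
    exact mul_nonpos_of_nonpos_of_nonneg
      (hψ0 s ⟨hs.1, hs.2.trans_le hu.2⟩)
      (hFnn s ⟨hs.1.le, hs.2.le.trans hu.2⟩)
  linarith
end

section
/- Let F_X, F_Y be CDFs that are single-crossing from below: there exists x_1 such that F_X(x) ≤ F_Y(x) for x < x_1 and F_X(x) ≥ F_Y(x) for x > x_1. Let H be a differentiable distortion function with H' > 0. Then ∫_0^u Q_X(t) dH(t) ≥ ∫_0^u Q_Y(t) dH(t) for all u ∈ [0,1] if and only if ∫_0^1 Q_X(t) dH(t) ≥ ∫_0^1 Q_Y(t) dH(t). -/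
/-!
Below the crossing level `t₁ = F_Y(x₁)` the quantile of `Y` lies below that of `X`, and above it
the order is reversed. So `∫₀ᵘ (Q_X - Q_Y) dH` increases in `u` up to `t₁` and decreases after it;
starting from `0` at `u = 0`, it stays nonnegative on `[0, 1]` as soon as its value at `u = 1` is.
-/

open Set intervalIntegral

/-- The right-continuous generalized inverse `f⁻¹(p) = sup {z | f z ≤ p}`. -/
noncomputable def rcInv (f : ℝ → ℝ) (p : ℝ) : ℝ := sSup {z : ℝ | f z ≤ p}

open MeasureTheory Filter Topology

lemma nonempty_setOf_le_of_tendsto_atBot {F : ℝ → ℝ} {a t : ℝ}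
    (hF : Tendsto F atBot (𝓝 a)) (ht : a < t) : {z | F z ≤ t}.Nonempty :=
  let ⟨z, hz⟩ := (hF.eventually_lt_const ht).exists
  ⟨z, hz.le⟩

lemma bddAbove_setOf_le_of_tendsto_atTop {F : ℝ → ℝ} {b t : ℝ} (hF : Monotone F)
    (hFb : Tendsto F atTop (𝓝 b)) (ht : t < b) : BddAbove {z | F z ≤ t} := by
  obtain ⟨z₀, hz₀⟩ := (hFb.eventually_const_lt ht).exists
  exact ⟨z₀, fun z hz => le_of_not_gt fun hlt => (hz₀.trans_le (hF hlt.le)).not_ge hz⟩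

section Crossing

variable {F G : ℝ → ℝ} {x₁ t : ℝ}

/-- Below the crossing level, `{F ≤ t}` is bounded by `x₁` itself and contains `{G ≤ t}`. -/
lemma rcInv_le_rcInv_of_lt_crossing (hG : Monotone G) (hG0 : Tendsto G atBot (𝓝 0))
    (hcross₁ : ∀ x < x₁, F x ≤ G x) (hcross₂ : ∀ x, x₁ < x → G x ≤ F x)
    (ht0 : 0 < t) (ht : t < G x₁) : rcInv G t ≤ rcInv F t := by
  have hbdd : BddAbove {z | F z ≤ t} := ⟨x₁, fun z hz => le_of_not_gt fun hz₁ =>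
    ((hG hz₁.le).trans (hcross₂ z hz₁) |>.trans hz).not_gt ht⟩
  refine csSup_le_csSup hbdd (nonempty_setOf_le_of_tendsto_atBot hG0 ht0) fun z hz => ?_
  have hz₁ : z < x₁ := lt_of_not_ge fun hz₁ => ((hG hz₁).trans hz).not_gt ht
  exact (hcross₁ z hz₁).trans hz

lemma rcInv_le_rcInv_of_crossing_le (hG : Monotone G) (hF0 : Tendsto F atBot (𝓝 0))
    (hG1 : Tendsto G atTop (𝓝 1)) (hcross₂ : ∀ x, x₁ < x → G x ≤ F x)
    (ht0 : 0 < t) (ht1 : t < 1) (ht : G x₁ ≤ t) : rcInv F t ≤ rcInv G t := by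
  have hbdd := bddAbove_setOf_le_of_tendsto_atTop hG hG1 ht1
  refine csSup_le (nonempty_setOf_le_of_tendsto_atBot hF0 ht0) fun z hz => ?_
  rcases le_or_gt z x₁ with hz₁ | hz₁
  · exact hz₁.trans (le_csSup hbdd ht)
  · exact le_csSup hbdd ((hcross₂ z hz₁).trans hz)

end Crossing

theorem integral_le_integral_of_single_crossing {f g : ℝ → ℝ} {a b c u : ℝ}
    (hf : IntervalIntegrable f volume a b) (hg : IntervalIntegrable g volume a b)
    (hlow : ∀ t ∈ Ioo a b, t < c → g t ≤ f t) (hhigh : ∀ t ∈ Ioo a b, c < t → f t ≤ g t)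
    (htot : ∫ t in a..b, g t ≤ ∫ t in a..b, f t) (hu : u ∈ Icc a b) :
    ∫ t in a..u, g t ≤ ∫ t in a..u, f t := by
  obtain ⟨hau, hub⟩ := hu
  have hhead : uIcc a u ⊆ uIcc a b := uIcc_subset_uIcc left_mem_uIcc (mem_uIcc_of_le hau hub)
  have htail : uIcc u b ⊆ uIcc a b := uIcc_subset_uIcc (mem_uIcc_of_le hau hub) right_mem_uIcc
  rcases le_or_gt u c with huc | hcu
  · exact integral_mono_on_of_le_Ioo hau (hg.mono_set hhead) (hf.mono_set hhead)
      fun t ht => hlow t ⟨ht.1, ht.2.trans_le hub⟩ (ht.2.trans_le huc)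
  · have htail_le : ∫ t in u..b, f t ≤ ∫ t in u..b, g t :=
      integral_mono_on_of_le_Ioo hub (hf.mono_set htail) (hg.mono_set htail)
        fun t ht => hhigh t ⟨hau.trans_lt ht.1, ht.2⟩ (hcu.trans ht.1)
    rw [← integral_add_adjacent_intervals (hf.mono_set hhead) (hf.mono_set htail),
      ← integral_add_adjacent_intervals (hg.mono_set hhead) (hg.mono_set htail)] at htot
    linarith

theorem stmt_7_general (FX FY : ℝ → ℝ)
    (hFYmono : Monotone FY)
    (hFX0 : Filter.Tendsto FX Filter.atBot (nhds 0))
    (hFY0 : Filter.Tendsto FY Filter.atBot (nhds 0))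
    (hFY1 : Filter.Tendsto FY Filter.atTop (nhds 1))
    (x₁ : ℝ)
    (hcross₁ : ∀ x < x₁, FX x ≤ FY x) (hcross₂ : ∀ x, x₁ < x → FY x ≤ FX x)
    (H : ℝ → ℝ) (hH' : ∀ t ∈ Icc (0:ℝ) 1, 0 < deriv H t)
    (hQXint : IntervalIntegrable (fun t => rcInv FX t * deriv H t) MeasureTheory.volume 0 1)
    (hQYint : IntervalIntegrable (fun t => rcInv FY t * deriv H t) MeasureTheory.volume 0 1) :
    (∀ u ∈ Icc (0:ℝ) 1,
        ∫ t in (0:ℝ)..u, rcInv FX t * deriv H t ≥ ∫ t in (0:ℝ)..u, rcInv FY t * deriv H t)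
      ↔ ∫ t in (0:ℝ)..1, rcInv FX t * deriv H t ≥ ∫ t in (0:ℝ)..1, rcInv FY t * deriv H t := by
  refine ⟨fun h => h 1 ⟨zero_le_one, le_rfl⟩, fun htot u hu => ?_⟩
  have hH'_nonneg : ∀ t ∈ Ioo (0:ℝ) 1, 0 ≤ deriv H t :=
    fun t ht => (hH' t (Ioo_subset_Icc_self ht)).le
  refine integral_le_integral_of_single_crossing (c := FY x₁) hQXint hQYint
    (fun t ht htc => ?_) (fun t ht htc => ?_) htot hu
  · exact mul_le_mul_of_nonneg_right
      (rcInv_le_rcInv_of_lt_crossing hFYmono hFY0 hcross₁ hcross₂ ht.1 htc) (hH'_nonneg t ht)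
  · exact mul_le_mul_of_nonneg_right
      (rcInv_le_rcInv_of_crossing_le hFYmono hFX0 hFY1 hcross₂ ht.1 ht.2 htc.le) (hH'_nonneg t ht)

/-- For single-crossing (from below) CDFs, `H`-distorted stochastic dominance is
equivalent to comparison of the total distorted expectations. -/
theorem stmt_7 (FX FY : ℝ → ℝ)
    (hFXmono : Monotone FX) (hFYmono : Monotone FY)
    (hFX0 : Filter.Tendsto FX Filter.atBot (nhds 0))
    (hFX1 : Filter.Tendsto FX Filter.atTop (nhds 1))
    (hFY0 : Filter.Tendsto FY Filter.atBot (nhds 0))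
    (hFY1 : Filter.Tendsto FY Filter.atTop (nhds 1))
    (x₁ : ℝ)
    (hcross₁ : ∀ x < x₁, FX x ≤ FY x) (hcross₂ : ∀ x, x₁ < x → FY x ≤ FX x)
    (H : ℝ → ℝ) (hHdiff : Differentiable ℝ H)
    (hH0 : H 0 = 0) (hH1 : H 1 = 1) (hH' : ∀ t ∈ Icc (0:ℝ) 1, 0 < deriv H t)
    (hQXint : IntervalIntegrable (fun t => rcInv FX t * deriv H t) MeasureTheory.volume 0 1)
    (hQYint : IntervalIntegrable (fun t => rcInv FY t * deriv H t) MeasureTheory.volume 0 1) :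
    (∀ u ∈ Icc (0:ℝ) 1,
        ∫ t in (0:ℝ)..u, rcInv FX t * deriv H t ≥ ∫ t in (0:ℝ)..u, rcInv FY t * deriv H t)
      ↔ ∫ t in (0:ℝ)..1, rcInv FX t * deriv H t ≥ ∫ t in (0:ℝ)..1, rcInv FY t * deriv H t :=
  stmt_7_general FX FY hFYmono hFX0 hFY0 hFY1 x₁ hcross₁ hcross₂ H hH' hQXint hQYint
end

section
/- Let X take values 1, 3, 6 with probabilities 1/2, 1/4, 1/4 and Y take values 0, 2, 4, 5 each with probability 1/4. Then ∫_0^u (Q_X(t) − Q_Y(t)) d(t^k) ≥ 0 for all u ∈ [0,1] if and only if 0 < k ≤ ln 2 / ln 3. -/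
open Set intervalIntegral MeasureTheory
open scoped Interval

/-- Quantile function of `X` taking values 1, 3, 6 with probabilities 1/2, 1/4, 1/4. -/
noncomputable def QX12 (t : ℝ) : ℝ := if t < 1/2 then 1 else if t < 3/4 then 3 else 6

/-- Quantile function of `Y` taking values 0, 2, 4, 5 each with probability 1/4. -/
noncomputable def QY12 (t : ℝ) : ℝ :=
  if t < 1/4 then 0 else if t < 1/2 then 2 else if t < 3/4 then 4 else 5

private lemma ae_of_ne (c : ℝ) {P : ℝ → Prop} (h : ∀ t, t ≠ c → P t) :
    ∀ᵐ t : ℝ, P t := by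
  rw [MeasureTheory.ae_iff]
  refine measure_mono_null (fun t ht => ?_) (measure_singleton c)
  by_contra hne
  exact ht (h t hne)

private lemma int_pow (k a b : ℝ) (hk : 0 < k) :
    (∫ t in a..b, k * t ^ (k - 1)) = b ^ k - a ^ k := by
  rw [intervalIntegral.integral_const_mul, integral_rpow (Or.inl (by linarith))]
  have hkk : k - 1 + 1 = k := by ring
  rw [hkk]
  field_simp

private lemma piece_integrable (k a b c : ℝ) (hk : 0 < k)
    (h : ∀ᵐ t : ℝ, t ∈ Ι a b → QX12 t - QY12 t = c) :
    IntervalIntegrable (fun t => (QX12 t - QY12 t) * (k * t ^ (k - 1))) volume a b := by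
  have base : IntervalIntegrable (fun t : ℝ => c * (k * t ^ (k - 1))) volume a b :=
    ((intervalIntegrable_rpow' (by linarith : (-1:ℝ) < k - 1)).const_mul k).const_mul c
  refine base.congr_ae ((MeasureTheory.ae_restrict_iff' measurableSet_uIoc).mpr ?_)
  filter_upwards [h] with t ht hmem
  simp [ht hmem]

private lemma piece_integral (k a b c : ℝ) (hk : 0 < k)
    (h : ∀ᵐ t : ℝ, t ∈ Ι a b → QX12 t - QY12 t = c) :
    (∫ t in a..b, (QX12 t - QY12 t) * (k * t ^ (k - 1)))
      = c * (b ^ k - a ^ k) := by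
  have : (∫ t in a..b, (QX12 t - QY12 t) * (k * t ^ (k - 1)))
      = ∫ t in a..b, c * (k * t ^ (k - 1)) := by
    refine intervalIntegral.integral_congr_ae ?_
    filter_upwards [h] with t ht hmem
    rw [ht hmem]
  rw [this, intervalIntegral.integral_const_mul, int_pow k a b hk]

private lemma aeA {v : ℝ} (h0 : 0 ≤ v) (h1 : v ≤ 1/4) :
    ∀ᵐ t : ℝ, t ∈ Ι (0:ℝ) v → QX12 t - QY12 t = 1 := by
  refine ae_of_ne (1/4) fun t ht hmem => ?_
  rw [Set.uIoc_of_le h0] at hmem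
  obtain ⟨h0t, htv⟩ := hmem
  have htq : t < 1/4 := lt_of_le_of_ne (le_trans htv h1) ht
  have hx : QX12 t = 1 := by unfold QX12; rw [if_pos (by linarith)]
  have hy : QY12 t = 0 := by unfold QY12; rw [if_pos htq]
  rw [hx, hy]; norm_num

private lemma aeB {v : ℝ} (h0 : 1/4 ≤ v) (h1 : v ≤ 3/4) :
    ∀ᵐ t : ℝ, t ∈ Ι (1/4:ℝ) v → QX12 t - QY12 t = -1 := by
  refine ae_of_ne (3/4) fun t ht hmem => ?_
  rw [Set.uIoc_of_le h0] at hmem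
  obtain ⟨h0t, htv⟩ := hmem
  have ht34 : t < 3/4 := lt_of_le_of_ne (le_trans htv h1) ht
  by_cases h12 : t < 1/2
  · have hx : QX12 t = 1 := by unfold QX12; rw [if_pos h12]
    have hy : QY12 t = 2 := by
      unfold QY12; rw [if_neg (by linarith), if_pos h12]
    rw [hx, hy]; norm_num
  · have hx : QX12 t = 3 := by unfold QX12; rw [if_neg h12, if_pos ht34]
    have hy : QY12 t = 4 := by
      unfold QY12; rw [if_neg (by linarith), if_neg h12, if_pos ht34]
    rw [hx, hy]; norm_num

private lemma aeC {v : ℝ} (h0 : 3/4 ≤ v) :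
    ∀ᵐ t : ℝ, t ∈ Ι (3/4:ℝ) v → QX12 t - QY12 t = 1 := by
  refine Filter.Eventually.of_forall fun t hmem => ?_
  rw [Set.uIoc_of_le h0] at hmem
  obtain ⟨h0t, htv⟩ := hmem
  have hx : QX12 t = 6 := by
    unfold QX12; rw [if_neg (by linarith), if_neg (by linarith)]
  have hy : QY12 t = 5 := by
    unfold QY12
    rw [if_neg (by linarith), if_neg (by linarith), if_neg (by linarith)]
  rw [hx, hy]; norm_num

/-- Power-distorted stochastic dominance of `X` over `Y` of order `1 + 1/k` holds
iff `k ≤ ln 2 / ln 3`. -/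
theorem stmt_12 (k : ℝ) (hk : 0 < k) :
    (∀ u ∈ Icc (0:ℝ) 1, 0 ≤ ∫ t in (0:ℝ)..u, (QX12 t - QY12 t) * (k * t ^ (k - 1)))
      ↔ k ≤ Real.log 2 / Real.log 3 := by
  have hlog3 : 0 < Real.log 3 := Real.log_pos (by norm_num)
  have hzk : (0:ℝ) ^ k = 0 := Real.zero_rpow hk.ne'
  have hqpos : (0:ℝ) < (1/4:ℝ) ^ k := Real.rpow_pos_of_pos (by norm_num) k
  -- integral from 0 to u for u in [1/4, 3/4]
  have mid : ∀ u : ℝ, 1/4 ≤ u → u ≤ 3/4 →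
      (∫ t in (0:ℝ)..u, (QX12 t - QY12 t) * (k * t ^ (k - 1)))
        = 2 * (1/4:ℝ) ^ k - u ^ k := by
    intro u hu1 hu2
    have i1 := piece_integrable k 0 (1/4) 1 hk (aeA (by norm_num) le_rfl)
    have i2 := piece_integrable k (1/4) u (-1) hk (aeB hu1 hu2)
    rw [← intervalIntegral.integral_add_adjacent_intervals i1 i2,
      piece_integral k 0 (1/4) 1 hk (aeA (by norm_num) le_rfl),
      piece_integral k (1/4) u (-1) hk (aeB hu1 hu2), hzk]
    ring
  -- key equivalence : 3^k ≤ 2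
  constructor
  · intro h
    have h34 := h (3/4) ⟨by norm_num, by norm_num⟩
    rw [mid (3/4) (by norm_num) le_rfl] at h34
    have h32 : (3:ℝ) ^ k ≤ 2 := by
      have hmul : (3/4:ℝ) ^ k = 3 ^ k * (1/4) ^ k := by
        rw [← Real.mul_rpow (by norm_num) (by norm_num)]; norm_num
      have : (3:ℝ) ^ k * (1/4) ^ k ≤ 2 * (1/4) ^ k := by
        rw [← hmul]; linarith
      exact le_of_mul_le_mul_right this hqpos
    have hlog : k * Real.log 3 ≤ Real.log 2 := by
      have := Real.log_le_log (Real.rpow_pos_of_pos (by norm_num) k) h32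
      rwa [Real.log_rpow (by norm_num)] at this
    exact (le_div_iff₀ hlog3).mpr hlog
  · intro hkle u hu
    have h32 : (3:ℝ) ^ k ≤ 2 := by
      have hlog : Real.log 3 * k ≤ Real.log 2 := by
        have := (le_div_iff₀ hlog3).mp hkle
        linarith [this]
      calc (3:ℝ) ^ k = Real.exp (Real.log 3 * k) := Real.rpow_def_of_pos (by norm_num) k
        _ ≤ Real.exp (Real.log 2) := Real.exp_le_exp.mpr hlog
        _ = 2 := Real.exp_log (by norm_num)
    have key : (3/4:ℝ) ^ k ≤ 2 * (1/4) ^ k := by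
      have hmul : (3/4:ℝ) ^ k = 3 ^ k * (1/4) ^ k := by
        rw [← Real.mul_rpow (by norm_num) (by norm_num)]; norm_num
      rw [hmul]
      exact mul_le_mul_of_nonneg_right h32 hqpos.le
    obtain ⟨hu0, hu1⟩ := hu
    rcases le_or_gt u (1/4) with hc1 | hc1
    · rw [piece_integral k 0 u 1 hk (aeA hu0 hc1), hzk]
      have := Real.rpow_nonneg hu0 k
      linarith
    · rcases le_or_gt u (3/4) with hc2 | hc2
      · rw [mid u hc1.le hc2]
        have huk : u ^ k ≤ (3/4:ℝ) ^ k := Real.rpow_le_rpow hu0 hc2 hk.le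
        linarith
      · have i12 : IntervalIntegrable
            (fun t => (QX12 t - QY12 t) * (k * t ^ (k - 1))) volume 0 (3/4) := by
          have i1 := piece_integrable k 0 (1/4) 1 hk (aeA (by norm_num) le_rfl)
          have i2 := piece_integrable k (1/4) (3/4) (-1) hk (aeB (by norm_num) le_rfl)
          exact i1.trans i2
        have i3 := piece_integrable k (3/4) u 1 hk (aeC hc2.le)
        rw [← intervalIntegral.integral_add_adjacent_intervals i12 i3,
          mid (3/4) (by norm_num) le_rfl,
          piece_integral k (3/4) u 1 hk (aeC hc2.le)]
        have huk : (3/4:ℝ) ^ k ≤ u ^ k := Real.rpow_le_rpow (by norm_num) hc2.le hk.le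
        linarith
end

section
/- Let X, Y belong to the same location-scale family: Q_X(t) = σ_X G⁻¹(t) + μ_X and Q_Y(t) = σ_Y G⁻¹(t) + μ_Y with σ_Y > σ_X > 0 and μ_X ≥ μ_Y, where G⁻¹ is a quantile function. Let H be a differentiable distortion with H' > 0. Then ∫_0^u Q_X dH ≥ ∫_0^u Q_Y dH for all u ∈ [0,1] if and only if ∫_0^1 G⁻¹(t) dH(t) ≤ (μ_X − μ_Y)/(σ_Y − σ_X). -/
/-!
Write `w = H'` and `c = (μ_X − μ_Y)/(σ_Y − σ_X)`. The difference of the two distorted integrals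
over `[0, u]` is `(σ_Y − σ_X) ∫_0^u (c − G⁻¹) w`, and `c − G⁻¹` is antitone, so it changes sign
at most once, from `+` to `−`. Hence its `w`-weighted integral over `[0, u]` is nonnegative for
every `u` as soon as it is nonnegative over the whole of `[0, 1]`, where it equals
`c − ∫_0^1 G⁻¹ dH` because `∫_0^1 w = H 1 − H 0 = 1`.
-/

open Set intervalIntegral

theorem integral_mul_nonneg_of_antitoneOn {f w : ℝ → ℝ} {a b u : ℝ}
    (hf : AntitoneOn f (Icc a b)) (hw : ∀ t ∈ Icc a b, 0 ≤ w t)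
    (hfw : IntervalIntegrable (fun t => f t * w t) MeasureTheory.volume a b)
    (h : 0 ≤ ∫ t in a..b, f t * w t) (hu : u ∈ Icc a b) :
    0 ≤ ∫ t in a..u, f t * w t := by
  rcases le_or_gt 0 (f u) with hfu | hfu
  · refine integral_nonneg hu.1 fun t ht => ?_
    have ht' : t ∈ Icc a b := ⟨ht.1, ht.2.trans hu.2⟩
    exact mul_nonneg (hfu.trans (hf ht' hu ht.2)) (hw t ht')
  · have htail : 0 ≤ ∫ t in u..b, -(f t * w t) := by
      refine integral_nonneg hu.2 fun t ht => ?_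
      have ht' : t ∈ Icc a b := ⟨hu.1.trans ht.1, ht.2⟩
      have hft : f t < 0 := (hf hu ht' ht.1).trans_lt hfu
      nlinarith [hw t ht']
    have hsplit := integral_add_adjacent_intervals
      (hfw.mono_set (uIcc_subset_uIcc_left (Icc_subset_uIcc hu)))
      (hfw.mono_set (uIcc_subset_uIcc_right (Icc_subset_uIcc hu)))
    rw [integral_neg] at htail
    linarith

theorem integral_sub_integral_affine_mul {G w : ℝ → ℝ} {a b : ℝ}
    (hGw : IntervalIntegrable (fun t => G t * w t) MeasureTheory.volume a b)
    (hw : IntervalIntegrable w MeasureTheory.volume a b) {σ₁ σ₂ : ℝ} (hσ : σ₁ ≠ σ₂) (μ₁ μ₂ : ℝ) :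
    (∫ t in a..b, (σ₁ * G t + μ₁) * w t) - ∫ t in a..b, (σ₂ * G t + μ₂) * w t =
      (σ₂ - σ₁) * ∫ t in a..b, ((μ₁ - μ₂) / (σ₂ - σ₁) - G t) * w t := by
  have affine : ∀ σ μ : ℝ, ∫ t in a..b, (σ * G t + μ) * w t =
      σ * (∫ t in a..b, G t * w t) + μ * ∫ t in a..b, w t := by
    intro σ μ
    simp_rw [show ∀ t, (σ * G t + μ) * w t = σ * (G t * w t) + μ * w t from fun t => by ring]
    rw [integral_add (hGw.const_mul σ) (hw.const_mul μ), integral_const_mul, integral_const_mul]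
  simp_rw [show ∀ t, ((μ₁ - μ₂) / (σ₂ - σ₁) - G t) * w t =
    (μ₁ - μ₂) / (σ₂ - σ₁) * w t - G t * w t from fun t => by ring]
  rw [affine, affine, integral_sub (hw.const_mul _) hGw, integral_const_mul]
  field_simp [sub_ne_zero.2 hσ.symm]
  ring

theorem stmt_13_general (Ginv : ℝ → ℝ) (hG : MonotoneOn Ginv (Icc 0 1))
    (μX μY σX σY : ℝ) (hσσ : σX < σY)
    (H : ℝ → ℝ) (hHdiff : Differentiable ℝ H)
    (hH0 : H 0 = 0) (hH1 : H 1 = 1) (hH' : ∀ t ∈ Icc (0:ℝ) 1, 0 < deriv H t)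
    (hint : IntervalIntegrable (fun t => Ginv t * deriv H t) MeasureTheory.volume 0 1)
    (hint' : IntervalIntegrable (deriv H) MeasureTheory.volume 0 1) :
    (∀ u ∈ Icc (0:ℝ) 1,
        ∫ t in (0:ℝ)..u, (σX * Ginv t + μX) * deriv H t ≥
          ∫ t in (0:ℝ)..u, (σY * Ginv t + μY) * deriv H t)
      ↔ ∫ t in (0:ℝ)..1, Ginv t * deriv H t ≤ (μX - μY) / (σY - σX) := by
  set c := (μX - μY) / (σY - σX)
  have hsub {u : ℝ} (hu : u ∈ Icc (0:ℝ) 1) : uIcc 0 u ⊆ uIcc 0 1 :=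
    uIcc_subset_uIcc_left (Icc_subset_uIcc hu)
  have dominance_iff {u : ℝ} (hu : u ∈ Icc (0:ℝ) 1) :
      ∫ t in (0:ℝ)..u, (σX * Ginv t + μX) * deriv H t ≥
          ∫ t in (0:ℝ)..u, (σY * Ginv t + μY) * deriv H t ↔
        0 ≤ ∫ t in (0:ℝ)..u, (c - Ginv t) * deriv H t := by
    have hdiff := integral_sub_integral_affine_mul (hint.mono_set (hsub hu))
      (hint'.mono_set (hsub hu)) hσσ.ne μX μY
    rw [ge_iff_le, ← sub_nonneg, hdiff, mul_nonneg_iff_of_pos_left (sub_pos.2 hσσ)]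
  have total : ∫ t in (0:ℝ)..1, (c - Ginv t) * deriv H t =
      c - ∫ t in (0:ℝ)..1, Ginv t * deriv H t := by
    simp only [sub_mul]
    rw [integral_sub (hint'.const_mul c) hint, integral_const_mul,
      integral_deriv_eq_sub (fun x _ => hHdiff x) hint', hH1, hH0, sub_zero, mul_one]
  have h1 : (1:ℝ) ∈ Icc (0:ℝ) 1 := right_mem_Icc.2 zero_le_one
  constructor
  · intro h
    have hnonneg := (dominance_iff h1).1 (h 1 h1)
    rw [total] at hnonneg
    linarith
  · intro h u hu
    refine (dominance_iff hu).2 (integral_mul_nonneg_of_antitoneOn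
      (fun s hs t ht hst => sub_le_sub_left (hG hs ht hst) c) (fun t ht => (hH' t ht).le)
      (by simpa only [sub_mul] using (hint'.const_mul c).sub hint) (by rw [total]; linarith) hu)

/-- For members of a common location-scale family with `σ_Y > σ_X` and `μ_X ≥ μ_Y`,
`H`-distorted stochastic dominance reduces to a comparison of the distorted expectation
of the standardized member with the threshold `(μ_X − μ_Y)/(σ_Y − σ_X)`. -/
theorem stmt_13 (Ginv : ℝ → ℝ) (hG : MonotoneOn Ginv (Icc 0 1))
    (μX μY σX σY : ℝ) (hσ : 0 < σX) (hσσ : σX < σY) (hμ : μY ≤ μX)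
    (H : ℝ → ℝ) (hHdiff : Differentiable ℝ H)
    (hH0 : H 0 = 0) (hH1 : H 1 = 1) (hH' : ∀ t ∈ Icc (0:ℝ) 1, 0 < deriv H t)
    (hint : IntervalIntegrable (fun t => Ginv t * deriv H t) MeasureTheory.volume 0 1)
    (hint' : IntervalIntegrable (deriv H) MeasureTheory.volume 0 1) :
    (∀ u ∈ Icc (0:ℝ) 1,
        ∫ t in (0:ℝ)..u, (σX * Ginv t + μX) * deriv H t ≥
          ∫ t in (0:ℝ)..u, (σY * Ginv t + μY) * deriv H t)
      ↔ ∫ t in (0:ℝ)..1, Ginv t * deriv H t ≤ (μX - μY) / (σY - σX) :=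
  stmt_13_general Ginv hG μX μY σX σY hσσ H hHdiff hH0 hH1 hH' hint hint'
end
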